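/- Write P_k^{(j)}(x) = Σ_{m=1}^{n^k} ε_m^{(j,k)} x^m. Then for every k ∈ ℕ₀, every j with 1 ≤ j ≤ n, every m with 1 ≤ m ≤ n^k, and every x ∈ ℂ with |x| = 1, |Σ_{i=1}^m ε_i^{(j,k)} x^i| ≤ (n + √n)·n^{k/2}. -/

import Mathlib

open Polynomial Finset

/-- The vector of polynomials `(P_k^{(1)}, …, P_k^{(n)})` defined by
`P_0^{(j)}(x) = x` and `v_{k+1}(x) = A^{(n,k)}(x) v_k(x)`, where `A^{(n,k)}(x)` has
`(j,l)` entry `ω^{jl} x^{l·n^k}` with `ω = exp(2πi/n)` (indices `0`-based). -/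
noncomputable def Fvec (n : ℕ) : ℕ → Fin n → Polynomial ℂ
  | 0 => fun _ => Polynomial.X
  | k + 1 => fun j => ∑ l : Fin n,
      Polynomial.C (Complex.exp (2 * Real.pi * Complex.I / n) ^ ((j : ℕ) * (l : ℕ)))
        * Polynomial.X ^ ((l : ℕ) * n ^ k) * Fvec n k l

/-!
Write `N = n ^ k`. Every `P_k^{(l)}` is divisible by `x` and has degree at most `N`, so the
coefficients of `P_{k+1}^{(j)} = ∑_l ω^{jl} x^{lN} P_k^{(l)}` are those of the `P_k^{(l)}`, laid out
in consecutive blocks of length `N`. A partial sum of length `lN + r` is therefore made of `l`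
complete blocks, of moduli `|P_k^{(l')}(x)|` on the unit circle, and a partial sum of
`P_k^{(l)}` of length `r`. The matrix `(ω^{jl})` is `√n` times a unitary matrix, hence
`∑_j |P_k^{(j)}(x)|² = n^{k+1}` for `|x| = 1`, and Cauchy–Schwarz bounds the complete blocks by
`√((n - 1) n^{k+1})`. This is at most `(n - 1) √n^{k+1}`, the increment of
`B_k = (n + √n) √n^k - (n + √n - 1)`, so induction on `k` bounds all partial sums by `B_k`.
-/

open ComplexConjugate

theorem IsPrimitiveRoot.sum_pow_mul_conj_pow {ζ : ℂ} {n : ℕ} (hζ : IsPrimitiveRoot ζ n)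
    (l l' : Fin n) :
    ∑ j : Fin n, ζ ^ ((j : ℕ) * l) * conj (ζ ^ ((j : ℕ) * l')) =
      if l = l' then (n : ℂ) else 0 := by
  have hn : n ≠ 0 := l.pos.ne'
  have hconj : conj (ζ ^ (l' : ℕ)) = (ζ ^ (l' : ℕ))⁻¹ :=
    (Complex.inv_eq_conj (by rw [norm_pow, hζ.norm'_eq_one hn, one_pow])).symm
  have hu : ζ ^ (l : ℕ) * conj (ζ ^ (l' : ℕ)) = 1 ↔ l = l' := by
    rw [hconj, mul_inv_eq_one₀ (pow_ne_zero _ (hζ.ne_zero hn))]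
    exact ⟨fun h => Fin.ext (hζ.pow_inj l.isLt l'.isLt h), fun h => h ▸ rfl⟩
  set u := ζ ^ (l : ℕ) * conj (ζ ^ (l' : ℕ))
  have hterm (j : Fin n) : ζ ^ ((j : ℕ) * l) * conj (ζ ^ ((j : ℕ) * l')) = u ^ (j : ℕ) := by
    rw [mul_pow, ← pow_mul, ← map_pow, ← pow_mul, mul_comm (l : ℕ), mul_comm (l' : ℕ)]
  rw [sum_congr rfl fun j _ => hterm j, Fin.sum_univ_eq_sum_range (u ^ ·)]
  split_ifs with h
  · simp [hu.mpr h]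
  · have hun : u ^ n = 1 := by
      rw [mul_pow, hconj, inv_pow, ← pow_mul, ← pow_mul, mul_comm _ n, mul_comm _ n, pow_mul,
        pow_mul, hζ.pow_eq_one, one_pow, one_pow, inv_one, mul_one]
    rw [geom_sum_eq (mt hu.mp h), hun, sub_self, zero_div]

theorem IsPrimitiveRoot.sum_norm_sq_dft {ζ : ℂ} {n : ℕ} (hζ : IsPrimitiveRoot ζ n)
    (c : Fin n → ℂ) :
    ∑ j : Fin n, ‖∑ l : Fin n, ζ ^ ((j : ℕ) * l) * c l‖ ^ 2 = n * ∑ l, ‖c l‖ ^ 2 := by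
  apply Complex.ofReal_injective
  push_cast
  simp_rw [← Complex.mul_conj', map_sum, map_mul, sum_mul_sum]
  calc _ = ∑ l : Fin n, ∑ l' : Fin n,
          (∑ j : Fin n, ζ ^ ((j : ℕ) * l) * conj (ζ ^ ((j : ℕ) * l'))) *
            (c l * conj (c l')) := by
        rw [sum_comm]
        refine sum_congr rfl fun l _ => ?_
        rw [sum_comm]
        refine sum_congr rfl fun l' _ => ?_
        rw [sum_mul]
        exact sum_congr rfl fun j _ => by ring
    _ = _ := by simp only [hζ.sum_pow_mul_conj_pow, ite_mul, zero_mul, sum_ite_eq, mem_univ,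
        if_true, mul_sum]

namespace Polynomial

variable {R : Type*} [CommSemiring R]

noncomputable def partialSum (p : R[X]) (m : ℕ) (x : R) : R :=
  ∑ i ∈ range (m + 1), p.coeff i * x ^ i

theorem partialSum_sum {ι : Type*} (s : Finset ι) (p : ι → R[X]) (m : ℕ) (x : R) :
    partialSum (∑ i ∈ s, p i) m x = ∑ i ∈ s, partialSum (p i) m x := by
  simp only [partialSum, finsetSum_coeff, sum_mul]
  exact sum_comm

theorem partialSum_C_mul (a : R) (p : R[X]) (m : ℕ) (x : R) :
    partialSum (C a * p) m x = a * partialSum p m x := by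
  simp only [partialSum, coeff_C_mul, mul_sum, mul_assoc]

theorem partialSum_of_natDegree_le {p : R[X]} {m : ℕ} (h : p.natDegree ≤ m) (x : R) :
    partialSum p m x = p.eval x :=
  (eval_eq_sum_range' (Nat.lt_succ_of_le h) x).symm

theorem partialSum_X_pow_mul_add (e r : ℕ) (q : R[X]) (x : R) :
    partialSum (X ^ e * q) (e + r) x = x ^ e * partialSum q r x := by
  rw [partialSum, add_assoc, sum_range_add, sum_eq_zero fun i hi => ?_, zero_add, partialSum,
    mul_sum]
  · refine sum_congr rfl fun i _ => ?_
    rw [add_comm e i, coeff_X_pow_mul, pow_add]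
    ring
  · rw [coeff_X_pow_mul', if_neg (not_le.mpr (mem_range.mp hi)), zero_mul]

theorem partialSum_X_pow_mul_of_le {q : R[X]} (hq : q.coeff 0 = 0) {e m : ℕ} (hm : m ≤ e)
    (x : R) : partialSum (X ^ e * q) m x = 0 := by
  refine sum_eq_zero fun i hi => ?_
  rw [coeff_X_pow_mul']
  split_ifs with h
  · rw [show i - e = 0 by have := mem_range.mp hi; omega, hq, zero_mul]
  · exact zero_mul _

theorem partialSum_eq_sum_Icc {p : R[X]} (hp : p.coeff 0 = 0) (m : ℕ) (x : R) :
    partialSum p m x = ∑ i ∈ Icc 1 m, p.coeff i * x ^ i := by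
  rw [partialSum, sum_range_succ', hp, zero_mul, add_zero, ← Ico_add_one_right_eq_Icc,
    sum_Ico_eq_sum_range, Nat.add_sub_cancel]
  exact sum_congr rfl fun i _ => by rw [add_comm 1 i]

theorem partialSum_sum_blocks {n N : ℕ} (a : Fin n → R) (q : Fin n → R[X])
    (hq0 : ∀ l, (q l).coeff 0 = 0) (hqN : ∀ l, (q l).natDegree ≤ N) (l : Fin n) {r : ℕ}
    (hr : r ≤ N) (x : R) :
    partialSum (∑ l', C (a l') * X ^ ((l' : ℕ) * N) * q l') ((l : ℕ) * N + r) x =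
      ∑ l' ∈ Iio l, a l' * x ^ ((l' : ℕ) * N) * (q l').eval x +
        a l * x ^ ((l : ℕ) * N) * partialSum (q l) r x := by
  have hblock : ∀ l', partialSum (C (a l') * X ^ ((l' : ℕ) * N) * q l') ((l : ℕ) * N + r) x =
      (if l' < l then a l' * x ^ ((l' : ℕ) * N) * (q l').eval x else 0) +
        if l' = l then a l * x ^ ((l : ℕ) * N) * partialSum (q l) r x else 0 := by
    intro l'
    rw [mul_assoc, partialSum_C_mul]
    rcases lt_trichotomy l' l with h | rfl | h
    · have hle : ((l' : ℕ) + 1) * N ≤ l * N := Nat.mul_le_mul_right N h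
      have hdeg : (X ^ ((l' : ℕ) * N) * q l').natDegree ≤ l * N + r :=
        calc _ ≤ (l' : ℕ) * N + N :=
              natDegree_mul_le.trans (add_le_add (natDegree_X_pow_le _) (hqN l'))
          _ ≤ l * N + r := by linarith
      simp [h, h.ne, partialSum_of_natDegree_le hdeg, mul_assoc]
    · simp [partialSum_X_pow_mul_add, mul_assoc]
    · have hle : ((l : ℕ) + 1) * N ≤ l' * N := Nat.mul_le_mul_right N h
      have hm : (l : ℕ) * N + r ≤ l' * N := by linarith
      simp [h.not_gt, h.ne', partialSum_X_pow_mul_of_le (hq0 l') hm]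
  rw [partialSum_sum, sum_congr rfl fun l' _ => hblock l', sum_add_distrib, ← sum_filter,
    filter_gt_eq_Iio, sum_ite_eq' univ l, if_pos (mem_univ l)]

end Polynomial

theorem norm_partialSum_sum_blocks_le {n N : ℕ} {a : Fin n → ℂ} (ha : ∀ l, ‖a l‖ = 1)
    {q : Fin n → ℂ[X]} (hq0 : ∀ l, (q l).coeff 0 = 0) (hqN : ∀ l, (q l).natDegree ≤ N)
    (l : Fin n) {r : ℕ} (hr : r ≤ N) {x : ℂ} (hx : ‖x‖ = 1) :
    ‖partialSum (∑ l', C (a l') * X ^ ((l' : ℕ) * N) * q l') ((l : ℕ) * N + r) x‖ ≤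
      ∑ l' ∈ Iio l, ‖(q l').eval x‖ + ‖partialSum (q l) r x‖ := by
  rw [partialSum_sum_blocks a q hq0 hqN l hr x]
  refine (norm_add_le _ _).trans (add_le_add ((norm_sum_le _ _).trans_eq ?_) ?_)
  · exact sum_congr rfl fun l' _ => by simp [ha, hx]
  · simp [ha, hx]

theorem Fin.sum_Iio_le_sqrt {n : ℕ} (f : Fin n → ℝ) (l : Fin n) :
    ∑ i ∈ Iio l, f i ≤ √((n - 1) * ∑ i, f i ^ 2) := by
  have hl : ((l : ℕ) : ℝ) + 1 ≤ n := by exact_mod_cast l.isLt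
  refine Real.le_sqrt_of_sq_le ?_
  calc (∑ i ∈ Iio l, f i) ^ 2 ≤ #(Iio l) * ∑ i ∈ Iio l, f i ^ 2 := sq_sum_le_card_mul_sum_sq
    _ ≤ (n - 1) * ∑ i, f i ^ 2 := by
      rw [Fin.card_Iio]
      exact mul_le_mul (by linarith) (sum_le_sum_of_subset_of_nonneg (subset_univ _)
        fun i _ _ => sq_nonneg _) (sum_nonneg fun i _ => sq_nonneg _) (by linarith)

theorem Real.sqrt_sub_one_mul_pow_succ_le {n : ℝ} (hn : 2 ≤ n) (k : ℕ) :
    √((n - 1) * n ^ (k + 1)) ≤ (n + √n) * √n ^ (k + 1) - (n + √n) * √n ^ k := by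
  have hs : √n ^ 2 = n := Real.sq_sqrt (by linarith)
  have hpow : n ^ (k + 1) = (√n ^ (k + 1)) ^ 2 := by rw [← pow_mul, mul_comm, pow_mul, hs]
  have hdiff : (n + √n) * √n ^ (k + 1) - (n + √n) * √n ^ k = (n - 1) * √n ^ (k + 1) := by
    rw [pow_succ]
    linear_combination √n ^ k * hs
  rw [hpow, Real.sqrt_mul (by linarith), Real.sqrt_sq (by positivity), hdiff]
  exact mul_le_mul_of_nonneg_right (Real.sqrt_le_self_iff.mpr (Or.inr (by linarith)))
    (by positivity)

theorem Nat.exists_eq_mul_add_of_le_mul {n N m : ℕ} (hn : 0 < n) (hm : m ≤ n * N) :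
    ∃ l : Fin n, ∃ r ≤ N, m = l * N + r := by
  rcases hm.eq_or_lt with rfl | hlt
  · refine ⟨⟨n - 1, Nat.sub_one_lt hn.ne'⟩, N, le_rfl, ?_⟩
    rw [Nat.sub_one_mul, Nat.sub_add_cancel (Nat.le_mul_of_pos_left N hn)]
  · have hN : 0 < N := Nat.pos_of_ne_zero fun h => by simp [h] at hlt
    exact ⟨⟨m / N, Nat.div_lt_of_lt_mul (by rwa [mul_comm])⟩, m % N, (Nat.mod_lt m hN).le,
      (Nat.div_add_mod' m N).symm⟩

theorem X_dvd_Fvec (n k : ℕ) (j : Fin n) : X ∣ Fvec n k j := by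
  induction k generalizing j with
  | zero => exact dvd_rfl
  | succ k ih => exact dvd_sum fun l _ => dvd_mul_of_dvd_right (ih l) _

theorem natDegree_Fvec_le (n k : ℕ) (j : Fin n) : (Fvec n k j).natDegree ≤ n ^ k := by
  induction k generalizing j with
  | zero => simp [Fvec]
  | succ k ih =>
    refine natDegree_sum_le_of_forall_le _ _ fun l _ => ?_
    have hl : ((l : ℕ) + 1) * n ^ k ≤ n ^ (k + 1) := by
      rw [pow_succ']; exact Nat.mul_le_mul_right _ l.isLt
    calc _ ≤ (l : ℕ) * n ^ k + n ^ k :=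
          natDegree_mul_le.trans (add_le_add (natDegree_C_mul_X_pow_le _ _) (ih l))
      _ ≤ n ^ (k + 1) := by linarith

theorem sum_norm_eval_Fvec_sq {n : ℕ} (hn : n ≠ 0) {x : ℂ} (hx : ‖x‖ = 1) (k : ℕ) :
    ∑ j : Fin n, ‖(Fvec n k j).eval x‖ ^ 2 = (n : ℝ) ^ (k + 1) := by
  induction k with
  | zero => simp [Fvec, hx]
  | succ k ih =>
    calc _ = ∑ j : Fin n,
          ‖∑ l : Fin n, Complex.exp (2 * Real.pi * Complex.I / n) ^ ((j : ℕ) * l) *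
            (x ^ ((l : ℕ) * n ^ k) * (Fvec n k l).eval x)‖ ^ 2 := by
          simp only [Fvec, eval_finsetSum, eval_mul, eval_C, eval_pow, eval_X, mul_assoc]
      _ = n * ∑ l : Fin n, ‖x ^ ((l : ℕ) * n ^ k) * (Fvec n k l).eval x‖ ^ 2 :=
          (Complex.isPrimitiveRoot_exp n hn).sum_norm_sq_dft _
      _ = _ := by simp only [norm_mul, norm_pow, hx, one_pow, one_mul, ih, ← pow_succ']

theorem norm_partialSum_Fvec_le {n : ℕ} (hn : 2 ≤ n) {x : ℂ} (hx : ‖x‖ = 1) (k : ℕ)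
    (j : Fin n) {m : ℕ} (hm : m ≤ n ^ k) :
    ‖partialSum (Fvec n k j) m x‖ ≤ (n + √n) * √n ^ k - (n + √n - 1) := by
  induction k generalizing j m with
  | zero =>
    have hpartial : ‖partialSum (Fvec n 0 j) m x‖ ≤ 1 := by
      rw [pow_zero] at hm
      interval_cases m <;> simp [partialSum, Fvec, sum_range_succ, hx]
    linarith
  | succ k ih =>
    have hn0 : n ≠ 0 := by omega
    have hζ := Complex.isPrimitiveRoot_exp n hn0
    obtain ⟨l, r, hr, rfl⟩ :=
      Nat.exists_eq_mul_add_of_le_mul (by omega) (by rwa [← pow_succ'] : m ≤ n * n ^ k)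
    have hblocks : ‖partialSum (Fvec n (k + 1) j) (l * n ^ k + r) x‖ ≤
        ∑ l' ∈ Iio l, ‖(Fvec n k l').eval x‖ + ‖partialSum (Fvec n k l) r x‖ :=
      norm_partialSum_sum_blocks_le (fun l => by rw [norm_pow, hζ.norm'_eq_one hn0, one_pow])
        (fun l => X_dvd_iff.mp (X_dvd_Fvec n k l)) (natDegree_Fvec_le n k) l hr hx
    have hprefix : ∑ l' ∈ Iio l, ‖(Fvec n k l').eval x‖ ≤ √((n - 1) * n ^ (k + 1)) := by
      simpa only [sum_norm_eval_Fvec_sq hn0 hx k] using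
        Fin.sum_Iio_le_sqrt (fun l' => ‖(Fvec n k l').eval x‖) l
    have hgrowth := Real.sqrt_sub_one_mul_pow_succ_le (by exact_mod_cast hn : (2 : ℝ) ≤ n) k
    linarith [ih l hr]

theorem stmt18_general (n : ℕ) (hn : 2 ≤ n) (k : ℕ) (j : Fin n)
    (m : ℕ) (hm2 : m ≤ n ^ k) (x : ℂ) (hx : ‖x‖ = 1) :
    ‖∑ i ∈ Finset.Icc 1 m, (Fvec n k j).coeff i * x ^ i‖
      ≤ ((n : ℝ) + Real.sqrt n) * (n : ℝ) ^ ((k : ℝ) / 2) := by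
  rw [← partialSum_eq_sum_Icc (X_dvd_iff.mp (X_dvd_Fvec n k j)),
    Real.rpow_div_two_eq_sqrt _ n.cast_nonneg, Real.rpow_natCast]
  have hn' : (2 : ℝ) ≤ n := by exact_mod_cast hn
  linarith [norm_partialSum_Fvec_le hn hx k j hm2, Real.sqrt_nonneg (n : ℝ)]

/-- Partial sums of the coefficient sequence of `P_k^{(j)}` satisfy
`|∑_{i=1}^m ε_i^{(j,k)} x^i| ≤ (n + √n)·n^{k/2}` on the unit circle. -/
theorem stmt18 (n : ℕ) (hn : 2 ≤ n) (k : ℕ) (j : Fin n)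
    (m : ℕ) (hm1 : 1 ≤ m) (hm2 : m ≤ n ^ k) (x : ℂ) (hx : ‖x‖ = 1) :
    ‖∑ i ∈ Finset.Icc 1 m, (Fvec n k j).coeff i * x ^ i‖
      ≤ ((n : ℝ) + Real.sqrt n) * (n : ℝ) ^ ((k : ℝ) / 2) :=
  stmt18_general n hn k j m hm2 x hx
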